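/- arXiv:math/0507207 — 2 statements merged into one kernel-verified Lean document; each statement's English description precedes it below -/
import Mathlib

section
/- The set Δ⁺ = {F ∈ Δ : F(x) = 0 for all x ≤ 0} of distance distribution functions is a closed subset of the metric space (Δ, d_L); consequently (Δ⁺, d_L) is compact and complete. -/
/-- The modified Lévy distance between two functions `F G : ℝ → ℝ`:
the infimum of all `h > 0` such that for every `x ∈ (-1/h, 1/h)` the inequalities
`F (x - h) - h ≤ G x ≤ F (x + h) + h` and `G (x - h) - h ≤ F x ≤ G (x + h) + h` hold. -/
noncomputable def dL (F G : ℝ → ℝ) : ℝ :=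
  sInf {h : ℝ | 0 < h ∧ ∀ x ∈ Set.Ioo (-h⁻¹) h⁻¹,
    (F (x - h) - h ≤ G x ∧ G x ≤ F (x + h) + h) ∧
    (G (x - h) - h ≤ F x ∧ F x ≤ G (x + h) + h)}

/-- A distribution function: a nondecreasing, left-continuous function `F : ℝ → [0,1]`
(the extension to `±∞` by `0`, `1` being implicit). `Δ` is the set of all such functions. -/
def IsDistributionFn (F : ℝ → ℝ) : Prop :=
  Monotone F ∧ (∀ x : ℝ, ContinuousWithinAt F (Set.Iio x) x) ∧
    (∀ x : ℝ, 0 ≤ F x) ∧ (∀ x : ℝ, F x ≤ 1)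

/-!
Closedness: if `dL Fₙ F < e` with `e < -y` and `e < (-y)⁻¹`, the Lévy inequality at `y` gives
`F y ≤ Fₙ (y + e) + e = e`; so `F` vanishes on `(-∞, 0)`, and at `0` by left continuity.

Compactness is Helly's selection theorem: by compactness of `[0, 1]^ℚ` a subsequence converges at
every rational to a nondecreasing `g`, and `F x = sup {g q | q < x}` is a left-continuous limit.
For a fixed `e`, a finite set of rationals meets every interval `(a, a + e)` with `a` in the
window, and uniform `e`-closeness at these finitely many points already gives the four Lévy
inequalities with `e`.

Completeness: on `Δ` the distance `dL` is a pseudometric. The triangle inequality holds because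
the windows fit, `(a + b)⁻¹ + b ≤ a⁻¹` when `a + b ≤ 1`, and `dL ≤ 1` covers the other case.
A Cauchy sequence with a convergent subsequence then converges.
-/

open Filter Set Topology

def IsLevyBound (F G : ℝ → ℝ) (h : ℝ) : Prop :=
  ∀ x ∈ Ioo (-h⁻¹) h⁻¹, F (x - h) - h ≤ G x ∧ G x ≤ F (x + h) + h

def levySet (F G : ℝ → ℝ) : Set ℝ :=
  {h | 0 < h ∧ IsLevyBound F G h ∧ IsLevyBound G F h}

def IsDistanceDistributionFn (F : ℝ → ℝ) : Prop :=
  IsDistributionFn F ∧ ∀ x : ℝ, x ≤ 0 → F x = 0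

section LevySet

variable {F G H : ℝ → ℝ} {a b h e : ℝ}

lemma dL_eq_sInf_levySet (F G : ℝ → ℝ) : dL F G = sInf (levySet F G) := by
  simp only [dL, levySet, IsLevyBound, ← forall_and]

lemma levySet_comm (F G : ℝ → ℝ) : levySet F G = levySet G F := by
  ext
  exact and_congr_right fun _ => and_comm

lemma dL_comm (F G : ℝ → ℝ) : dL F G = dL G F := by
  rw [dL_eq_sInf_levySet, levySet_comm, ← dL_eq_sInf_levySet]

lemma dL_nonneg (F G : ℝ → ℝ) : 0 ≤ dL F G := by
  rw [dL_eq_sInf_levySet]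
  exact Real.sInf_nonneg fun _ hh => hh.1.le

lemma dL_le_of_mem_levySet (hh : h ∈ levySet F G) : dL F G ≤ h := by
  rw [dL_eq_sInf_levySet]
  exact csInf_le ⟨0, fun _ hh => hh.1.le⟩ hh

lemma IsLevyBound.refl (hF : Monotone F) (hh : 0 < h) : IsLevyBound F F h := fun x _ =>
  ⟨by linarith [hF (sub_le_self x hh.le)], by linarith [hF (le_add_of_nonneg_right (a := x) hh.le)]⟩

lemma IsLevyBound.mono (hab : IsLevyBound F G a) (hF : Monotone F) (ha : 0 < a) (hle : a ≤ b) :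
    IsLevyBound F G b := by
  intro x hx
  have hinv : b⁻¹ ≤ a⁻¹ := inv_anti₀ ha hle
  obtain ⟨h₁, h₂⟩ := hab x ⟨by linarith [hx.1], by linarith [hx.2]⟩
  exact ⟨by linarith [hF (show x - b ≤ x - a by linarith)],
    by linarith [hF (show x + a ≤ x + b by linarith)]⟩

lemma inv_add_add_le_inv (ha : 0 < a) (hb : 0 < b) (hab : a + b ≤ 1) : (a + b)⁻¹ + b ≤ a⁻¹ := by
  have hdiff : a⁻¹ - (a + b)⁻¹ = b / (a * (a + b)) := by field_simp; ring
  have hprod : a * (a + b) ≤ 1 := by nlinarith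
  have : b ≤ b / (a * (a + b)) := le_div_self hb.le (by positivity) hprod
  linarith

lemma IsLevyBound.trans (hFG : IsLevyBound F G a) (hGH : IsLevyBound G H b) (ha : 0 < a)
    (hb : 0 < b) (hab : a + b ≤ 1) : IsLevyBound F H (a + b) := by
  rintro x ⟨hxl, hxr⟩
  have hwa := inv_add_add_le_inv ha hb hab
  have hwb : (a + b)⁻¹ ≤ b⁻¹ := inv_anti₀ hb (by linarith)
  obtain ⟨h₁, -⟩ := hFG (x - b) ⟨by linarith, by linarith⟩
  obtain ⟨-, h₂⟩ := hFG (x + b) ⟨by linarith, by linarith⟩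
  obtain ⟨h₃, h₄⟩ := hGH x ⟨by linarith, by linarith⟩
  constructor
  · rw [show x - (a + b) = x - b - a by ring]; linarith
  · rw [show x + (a + b) = x + b + a by ring]; linarith

lemma dL_self (hF : Monotone F) : dL F F = 0 := by
  have : levySet F F = Ioi 0 :=
    ext fun _ => ⟨fun hh => hh.1, fun hh => ⟨hh, .refl hF hh, .refl hF hh⟩⟩
  rw [dL_eq_sInf_levySet, this, csInf_Ioi]

lemma tendsto_dL_of_forall_eventually_mem {ι : Type*} {l : Filter ι} {Fn : ι → ℝ → ℝ}
    (h : ∀ e > 0, ∀ᶠ n in l, e ∈ levySet (Fn n) F) : Tendsto (fun n => dL (Fn n) F) l (𝓝 0) :=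
  tendsto_order.2 ⟨fun _ ha => .of_forall fun _ => ha.trans_le (dL_nonneg _ _),
    fun a ha => (h (a / 2) (half_pos ha)).mono fun _ hn =>
      (dL_le_of_mem_levySet hn).trans_lt (half_lt_self ha)⟩

end LevySet

namespace IsDistributionFn

variable {F G H : ℝ → ℝ} {e : ℝ}

lemma isLevyBound_one (hF : IsDistributionFn F) (hG : IsDistributionFn G) : IsLevyBound F G 1 :=
  fun x _ => ⟨by linarith [hF.2.2.2 (x - 1), hG.2.2.1 x],
    by linarith [hG.2.2.2 x, hF.2.2.1 (x + 1)]⟩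

lemma one_mem_levySet (hF : IsDistributionFn F) (hG : IsDistributionFn G) : 1 ∈ levySet F G :=
  ⟨one_pos, hF.isLevyBound_one hG, hG.isLevyBound_one hF⟩

lemma dL_le_one (hF : IsDistributionFn F) (hG : IsDistributionFn G) : dL F G ≤ 1 :=
  dL_le_of_mem_levySet (hF.one_mem_levySet hG)

lemma mem_levySet_of_dL_lt (hF : IsDistributionFn F) (hG : IsDistributionFn G) (he : dL F G < e) :
    e ∈ levySet F G := by
  rw [dL_eq_sInf_levySet] at he
  obtain ⟨h, ⟨hpos, hFG, hGF⟩, hlt⟩ := exists_lt_of_csInf_lt ⟨1, hF.one_mem_levySet hG⟩ he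
  exact ⟨hpos.trans hlt, hFG.mono hF.1 hpos hlt.le, hGF.mono hG.1 hpos hlt.le⟩

lemma dL_triangle (hF : IsDistributionFn F) (hG : IsDistributionFn G) (hH : IsDistributionFn H) :
    dL F H ≤ dL F G + dL G H := by
  refine le_of_forall_gt_imp_ge_of_dense fun c hc => ?_
  rcases le_or_gt 1 c with h1 | h1
  · exact (hF.dL_le_one hH).trans h1
  set d := (c - (dL F G + dL G H)) / 2 with hd
  obtain ⟨ha, hFG, hGF⟩ := hF.mem_levySet_of_dL_lt hG (show dL F G < dL F G + d by linarith)
  obtain ⟨hb, hGH, hHG⟩ := hG.mem_levySet_of_dL_lt hH (show dL G H < dL G H + d by linarith)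
  have hsum : dL F G + d + (dL G H + d) ≤ 1 := by linarith
  refine (dL_le_of_mem_levySet ⟨add_pos ha hb, hFG.trans hGH ha hb hsum, ?_⟩).trans_eq (by ring)
  rw [add_comm]
  exact hHG.trans hGF hb ha (by linarith)

lemma eq_zero_of_forall_neg (hF : IsDistributionFn F) (h : ∀ y < 0, F y = 0) :
    ∀ x ≤ 0, F x = 0 := by
  intro x hx
  rcases hx.lt_or_eq with hx | rfl
  · exact h x hx
  · exact tendsto_nhds_unique (hF.2.1 0)
      (tendsto_const_nhds.congr' (eventually_nhdsWithin_of_forall fun y hy => (h y hy).symm))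

end IsDistributionFn

lemma isDistanceDistributionFn_of_tendsto_dL {Fn : ℕ → ℝ → ℝ} {F : ℝ → ℝ}
    (hFn : ∀ n, IsDistanceDistributionFn (Fn n)) (hF : IsDistributionFn F)
    (hlim : Tendsto (fun n => dL (Fn n) F) atTop (𝓝 0)) : IsDistanceDistributionFn F := by
  refine ⟨hF, hF.eq_zero_of_forall_neg fun y hy => le_antisymm ?_ (hF.2.2.1 y)⟩
  have hy' : 0 < -y := neg_pos.2 hy
  have hsmall : ∀ e, 0 < e → e < -y → e < (-y)⁻¹ → F y ≤ e := by
    intro e he hey hey'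
    obtain ⟨n, hn⟩ := (hlim.eventually (gt_mem_nhds he)).exists
    have hwin : y ∈ Ioo (-e⁻¹) e⁻¹ :=
      ⟨by linarith [(lt_inv_comm₀ he hy').1 hey'], hy.trans (inv_pos.2 he)⟩
    have hbound := (((hFn n).1.mem_levySet_of_dL_lt hF hn).2.1 y hwin).2
    rw [(hFn n).2 (y + e) (by linarith)] at hbound
    linarith
  refine le_of_forall_gt_imp_ge_of_dense fun a ha => ?_
  obtain ⟨e, he, hea⟩ := exists_between (lt_min ha (lt_min hy' (inv_pos.2 hy')))
  simp only [lt_min_iff] at hea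
  exact (hsmall e he hea.2.1 hea.2.2).trans hea.1.le

lemma exists_subseq_tendsto_of_mem_Icc {α : Type*} [Countable α] {a b : ℝ} (f : ℕ → α → ℝ)
    (hf : ∀ n i, f n i ∈ Icc a b) :
    ∃ g : α → ℝ, ∃ φ : ℕ → ℕ, StrictMono φ ∧ ∀ i, Tendsto (fun k => f (φ k) i) atTop (𝓝 (g i)) := by
  obtain ⟨g, φ, hφ, hlim⟩ :=
    CompactSpace.tendsto_subseq fun n i => (⟨f n i, hf n i⟩ : Icc a b)
  exact ⟨fun i => g i, φ, hφ,
    fun i => (continuous_subtype_val.tendsto _).comp (tendsto_pi_nhds.1 hlim i)⟩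

lemma exists_finset_rat_near {K : Set ℝ} (hK : IsCompact K) {δ : ℝ} (hδ : 0 < δ) :
    ∃ Q : Finset ℚ, ∀ a ∈ K, ∃ q ∈ Q, a < q ∧ (q : ℝ) < a + δ := by
  have hcover : K ⊆ ⋃ q : ℚ, Ioo ((q : ℝ) - δ) q := fun a _ => by
    obtain ⟨q, haq, hqa⟩ := exists_rat_btwn (lt_add_of_pos_right a hδ)
    exact mem_iUnion.2 ⟨q, by linarith, haq⟩
  obtain ⟨Q, hQ⟩ := hK.elim_finite_subcover _ (fun _ => isOpen_Ioo) hcover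
  refine ⟨Q, fun a ha => ?_⟩
  obtain ⟨q, hq, hqa⟩ := mem_iUnion₂.1 (hQ ha)
  exact ⟨q, hq, hqa.2, by linarith [hqa.1]⟩

noncomputable def ratLeftSup (g : ℚ → ℝ) (x : ℝ) : ℝ :=
  sSup (g '' {q : ℚ | (q : ℝ) < x})

section RatLeftSup

variable {g : ℚ → ℝ} {q : ℚ} {x c : ℝ}

lemma le_ratLeftSup (hg : BddAbove (range g)) (hq : (q : ℝ) < x) : g q ≤ ratLeftSup g x :=
  le_csSup (hg.mono (image_subset_range _ _)) ⟨q, hq, rfl⟩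

lemma ratLeftSup_le_of_forall (h : ∀ q : ℚ, (q : ℝ) < x → g q ≤ c) : ratLeftSup g x ≤ c :=
  csSup_le (((exists_rat_lt x).elim fun q hq => ⟨q, hq⟩ : Set.Nonempty _).image g)
    (forall_mem_image.2 h)

lemma ratLeftSup_le (hg : Monotone g) (hx : x ≤ q) : ratLeftSup g x ≤ g q :=
  ratLeftSup_le_of_forall fun _ hr => hg (by exact_mod_cast (hr.trans_le hx).le)

lemma monotone_ratLeftSup (hg : BddAbove (range g)) : Monotone (ratLeftSup g) :=
  fun _ _ hxy => ratLeftSup_le_of_forall fun _ hq => le_ratLeftSup hg (hq.trans_le hxy)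

lemma continuousWithinAt_ratLeftSup (hg : BddAbove (range g)) (x : ℝ) :
    ContinuousWithinAt (ratLeftSup g) (Iio x) x := by
  have hmono := monotone_ratLeftSup hg
  have hbdd : BddAbove (ratLeftSup g '' Iio x) := ⟨_, forall_mem_image.2 fun _ hy => hmono hy.le⟩
  have hsup : sSup (ratLeftSup g '' Iio x) = ratLeftSup g x := by
    refine le_antisymm
      (csSup_le (nonempty_Iio.image _) (forall_mem_image.2 fun _ hy => hmono hy.le))
      (ratLeftSup_le_of_forall fun q hq => ?_)
    obtain ⟨y, hqy, hyx⟩ := exists_between hq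
    exact (le_ratLeftSup hg hqy).trans (le_csSup hbdd ⟨y, hyx, rfl⟩)
  simpa only [ContinuousWithinAt, hsup] using hmono.tendsto_nhdsLT x

lemma isDistributionFn_ratLeftSup (hg : ∀ q, g q ∈ Icc 0 1) : IsDistributionFn (ratLeftSup g) := by
  have hbdd : BddAbove (range g) := ⟨1, forall_mem_range.2 fun q => (hg q).2⟩
  refine ⟨monotone_ratLeftSup hbdd, continuousWithinAt_ratLeftSup hbdd, fun x => ?_,
    fun _ => ratLeftSup_le_of_forall fun q _ => (hg q).2⟩
  obtain ⟨q, hq⟩ := exists_rat_lt x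
  exact (hg q).1.trans (le_ratLeftSup hbdd hq)

/-- For `q₁ ∈ (x - e, x)` and `q₂ ∈ (x, x + e)`, the values `g q₁ ≤ F x ≤ g q₂` of
`F = ratLeftSup g` are within `e` of `G q₁ ≤ G x ≤ G q₂`. -/
lemma mem_levySet_ratLeftSup {G : ℝ → ℝ} {e : ℝ} {Q : Finset ℚ} (hG : Monotone G)
    (hg : Monotone g) (hbdd : BddAbove (range g)) (he : 0 < e)
    (hQ : ∀ a ∈ Icc (-e⁻¹ - e) e⁻¹, ∃ q ∈ Q, a < q ∧ (q : ℝ) < a + e)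
    (hclose : ∀ q ∈ Q, G q ∈ Ioo (g q - e) (g q + e)) : e ∈ levySet G (ratLeftSup g) := by
  have hgrid : ∀ x ∈ Ioo (-e⁻¹) e⁻¹, ∃ q₁ ∈ Q, ∃ q₂ ∈ Q,
      x - e < q₁ ∧ (q₁ : ℝ) < x ∧ x < q₂ ∧ (q₂ : ℝ) < x + e := by
    rintro x ⟨hxl, hxr⟩
    obtain ⟨q₁, h₁, hq₁⟩ := hQ (x - e) ⟨by linarith, by linarith⟩
    obtain ⟨q₂, h₂, hq₂⟩ := hQ x ⟨by linarith, hxr.le⟩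
    exact ⟨q₁, h₁, q₂, h₂, hq₁.1, by linarith [hq₁.2], hq₂⟩
  refine ⟨he, fun x hx => ?_, fun x hx => ?_⟩ <;>
    obtain ⟨q₁, h₁, q₂, h₂, hxq₁, hq₁x, hxq₂, hq₂x⟩ := hgrid x hx <;>
    obtain ⟨c₁, c₁'⟩ := hclose q₁ h₁ <;> obtain ⟨c₂, c₂'⟩ := hclose q₂ h₂
  · exact ⟨by linarith [hG hxq₁.le, le_ratLeftSup hbdd hq₁x],
      by linarith [ratLeftSup_le hg hxq₂.le, hG hq₂x.le]⟩
  · exact ⟨by linarith [ratLeftSup_le hg (show x - e ≤ q₁ by linarith), hG hq₁x.le],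
      by linarith [hG hxq₂.le, le_ratLeftSup hbdd hq₂x]⟩

lemma tendsto_dL_ratLeftSup {Fk : ℕ → ℝ → ℝ} (hFk : ∀ k, Monotone (Fk k)) (hg : Monotone g)
    (hbdd : BddAbove (range g)) (hlim : ∀ q : ℚ, Tendsto (fun k => Fk k q) atTop (𝓝 (g q))) :
    Tendsto (fun k => dL (Fk k) (ratLeftSup g)) atTop (𝓝 0) := by
  refine tendsto_dL_of_forall_eventually_mem fun e he => ?_
  obtain ⟨Q, hQ⟩ := exists_finset_rat_near (isCompact_Icc (a := -e⁻¹ - e) (b := e⁻¹)) he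
  have hclose : ∀ᶠ k in atTop, ∀ q ∈ Q, Fk k q ∈ Ioo (g q - e) (g q + e) :=
    (eventually_all_finset Q).2 fun q _ =>
      (hlim q).eventually (Ioo_mem_nhds (by linarith) (by linarith))
  exact hclose.mono fun k hk => mem_levySet_ratLeftSup (hFk k) hg hbdd he hQ hk

end RatLeftSup

theorem exists_subseq_tendsto_dL {Fn : ℕ → ℝ → ℝ} (hFn : ∀ n, IsDistanceDistributionFn (Fn n)) :
    ∃ F, IsDistanceDistributionFn F ∧
      ∃ φ : ℕ → ℕ, StrictMono φ ∧ Tendsto (fun k => dL (Fn (φ k)) F) atTop (𝓝 0) := by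
  have hFn01 : ∀ n x, Fn n x ∈ Icc 0 1 := fun n x => ⟨(hFn n).1.2.2.1 x, (hFn n).1.2.2.2 x⟩
  obtain ⟨g, φ, hφ, hlim⟩ :=
    exists_subseq_tendsto_of_mem_Icc (fun n (q : ℚ) => Fn n q) fun n q => hFn01 n q
  have hg01 : ∀ q, g q ∈ Icc 0 1 := fun q =>
    isClosed_Icc.mem_of_tendsto (hlim q) (.of_forall fun k => hFn01 (φ k) q)
  have hg_mono : Monotone g := fun q r hqr =>
    le_of_tendsto_of_tendsto' (hlim q) (hlim r) fun k => (hFn (φ k)).1.1 (by exact_mod_cast hqr)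
  have hg_zero : g 0 = 0 :=
    tendsto_nhds_unique (hlim 0)
      (by simp only [Rat.cast_zero, (hFn _).2 0 le_rfl, tendsto_const_nhds])
  have hF := isDistributionFn_ratLeftSup hg01
  refine ⟨ratLeftSup g, ⟨hF, fun x hx => le_antisymm ?_ (hF.2.2.1 x)⟩, φ, hφ,
    tendsto_dL_ratLeftSup (fun k => (hFn (φ k)).1.1) hg_mono
      ⟨1, forall_mem_range.2 fun q => (hg01 q).2⟩ hlim⟩
  exact (ratLeftSup_le hg_mono (q := 0) (by exact_mod_cast hx)).trans_eq hg_zero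

/-- `Δ` as a type of its own, carrying the Lévy pseudometric (a subtype of `ℝ → ℝ` would inherit the
topology of pointwise convergence). -/
structure DistributionFn where
  toFun : ℝ → ℝ
  isDistributionFn : IsDistributionFn toFun

noncomputable instance : PseudoMetricSpace DistributionFn where
  dist F G := dL F.toFun G.toFun
  dist_self F := dL_self F.isDistributionFn.1
  dist_comm F G := dL_comm F.toFun G.toFun
  dist_triangle F G H := F.isDistributionFn.dL_triangle G.isDistributionFn H.isDistributionFn

lemma tendsto_dL_of_cauchy_of_subseq {Fn : ℕ → ℝ → ℝ} {F : ℝ → ℝ}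
    (hFn : ∀ n, IsDistributionFn (Fn n)) (hF : IsDistributionFn F)
    (hcauchy : ∀ ε > 0, ∃ N, ∀ m ≥ N, ∀ n ≥ N, dL (Fn m) (Fn n) < ε) {φ : ℕ → ℕ}
    (hφ : StrictMono φ) (hsub : Tendsto (fun k => dL (Fn (φ k)) F) atTop (𝓝 0)) :
    Tendsto (fun n => dL (Fn n) F) atTop (𝓝 0) := by
  let u : ℕ → DistributionFn := fun n => ⟨Fn n, hFn n⟩
  have hu : CauchySeq u := Metric.cauchySeq_iff.2 hcauchy
  have hsub' : Tendsto (u ∘ φ) atTop (𝓝 ⟨F, hF⟩) := tendsto_iff_dist_tendsto_zero.2 hsub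
  exact tendsto_iff_dist_tendsto_zero.1
    (tendsto_nhds_of_cauchySeq_of_subseq hu hφ.tendsto_atTop hsub')

/-- The set `Δ⁺ = {F ∈ Δ : F x = 0 for all x ≤ 0}` is a closed subset of `(Δ, dL)`;
consequently `(Δ⁺, dL)` is compact (sequentially) and complete. -/
theorem deltaPlus_closed_compact_complete :
    (∀ (Fn : ℕ → ℝ → ℝ) (F : ℝ → ℝ),
      (∀ n, IsDistributionFn (Fn n) ∧ ∀ x : ℝ, x ≤ 0 → Fn n x = 0) →
      IsDistributionFn F →
      Filter.Tendsto (fun n => dL (Fn n) F) Filter.atTop (nhds 0) →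
      ∀ x : ℝ, x ≤ 0 → F x = 0) ∧
    (∀ Fn : ℕ → ℝ → ℝ,
      (∀ n, IsDistributionFn (Fn n) ∧ ∀ x : ℝ, x ≤ 0 → Fn n x = 0) →
      ∃ F : ℝ → ℝ, (IsDistributionFn F ∧ ∀ x : ℝ, x ≤ 0 → F x = 0) ∧
        ∃ φ : ℕ → ℕ, StrictMono φ ∧
          Filter.Tendsto (fun k => dL (Fn (φ k)) F) Filter.atTop (nhds 0)) ∧
    (∀ Fn : ℕ → ℝ → ℝ,
      (∀ n, IsDistributionFn (Fn n) ∧ ∀ x : ℝ, x ≤ 0 → Fn n x = 0) →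
      (∀ ε : ℝ, 0 < ε → ∃ N : ℕ, ∀ m ≥ N, ∀ n ≥ N, dL (Fn m) (Fn n) < ε) →
      ∃ F : ℝ → ℝ, (IsDistributionFn F ∧ ∀ x : ℝ, x ≤ 0 → F x = 0) ∧
        Filter.Tendsto (fun n => dL (Fn n) F) Filter.atTop (nhds 0)) := by
  refine ⟨fun Fn F hFn hF hlim => (isDistanceDistributionFn_of_tendsto_dL hFn hF hlim).2,
    fun Fn hFn => exists_subseq_tendsto_dL hFn, fun Fn hFn hcauchy => ?_⟩
  obtain ⟨F, hF, φ, hφ, hsub⟩ := exists_subseq_tendsto_dL hFn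
  exact ⟨F, hF, tendsto_dL_of_cauchy_of_subseq (fun n => (hFn n).1) hF.1 hcauchy hφ hsub⟩
end

section
/- Let (L, ν, τ) be a Šerstnev random normed space with sup-continuous triangle function τ satisfying τ(F,G)(x) ≥ sup_{t∈[0,1]} min{F(tx), G((1−t)x)} for all x ≥ 0 and F, G ∈ D⁺ (which implies condition (W)). Then the family P_{fc}(L) of all nonempty closed convex subsets of L is closed in P_f(L) with respect to the probabilistic Pompeiu–Hausdorff metric H; consequently, if L is complete then P_{fc}(L) is complete with respect to H, and the family P_{kc}(L) of all nonempty compact convex subsets of L is complete with respect to H. -/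
/-- A distance distribution function: a nondecreasing, left-continuous function
`F : ℝ → [0,1]` with `F x = 0` for all `x ≤ 0`.  `Δ⁺` is the set of all such functions. -/
def IsDDF (F : ℝ → ℝ) : Prop :=
  Monotone F ∧ (∀ x : ℝ, ContinuousWithinAt F (Set.Iio x) x) ∧
    (∀ x : ℝ, F x ≤ 1) ∧ (∀ x : ℝ, x ≤ 0 → F x = 0)

/-- The distance distribution function `ε₀`. -/
noncomputable def eps0 : ℝ → ℝ := fun x => if x ≤ 0 then 0 else 1

/-- A triangle function `τ` on `Δ⁺`: commutative, associative, nondecreasing in each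
argument, continuous (sequentially, with respect to the modified Lévy metric `dL`,
which metrizes the topology of weak convergence), with identity `ε₀`. -/
structure IsTriangleFn (τ : (ℝ → ℝ) → (ℝ → ℝ) → (ℝ → ℝ)) : Prop where
  isDDF : ∀ F G, IsDDF F → IsDDF G → IsDDF (τ F G)
  comm : ∀ F G, IsDDF F → IsDDF G → τ F G = τ G F
  assoc : ∀ F G K, IsDDF F → IsDDF G → IsDDF K → τ (τ F G) K = τ F (τ G K)
  mono : ∀ F₁ F₂ G₁ G₂, IsDDF F₁ → IsDDF F₂ → IsDDF G₁ → IsDDF G₂ →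
    F₁ ≤ F₂ → G₁ ≤ G₂ → τ F₁ G₁ ≤ τ F₂ G₂
  ident : ∀ F, IsDDF F → τ F eps0 = F
  continuous : ∀ (Fn Gn : ℕ → ℝ → ℝ) (F G : ℝ → ℝ),
    (∀ n, IsDDF (Fn n)) → (∀ n, IsDDF (Gn n)) → IsDDF F → IsDDF G →
    Filter.Tendsto (fun n => dL (Fn n) F) Filter.atTop (nhds 0) →
    Filter.Tendsto (fun n => dL (Gn n) G) Filter.atTop (nhds 0) →
    Filter.Tendsto (fun n => dL (τ (Fn n) (Gn n)) (τ F G)) Filter.atTop (nhds 0)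

/-- A probabilistic metric space `(L, ρ, τ)`. -/
structure IsPMSpace {L : Type*} (ρ : L → L → ℝ → ℝ)
    (τ : (ℝ → ℝ) → (ℝ → ℝ) → (ℝ → ℝ)) : Prop where
  isDDF : ∀ p q, IsDDF (ρ p q)
  triangleFn : IsTriangleFn τ
  refl : ∀ p, ρ p p = eps0
  eq_of : ∀ p q, ρ p q = eps0 → p = q
  symm : ∀ p q, ρ p q = ρ q p
  tri_ineq : ∀ p q r, τ (ρ p q) (ρ q r) ≤ ρ p r

/-- `τ` is sup-continuous: `τ (sup_i F_i) G = sup_i τ (F_i) G` pointwise, for every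
(nonempty) family `{F_i} ⊆ Δ⁺` and every `G ∈ Δ⁺`. -/
def SupContinuous (τ : (ℝ → ℝ) → (ℝ → ℝ) → (ℝ → ℝ)) : Prop :=
  ∀ (ι : Type) [Nonempty ι] (Fi : ι → ℝ → ℝ) (G : ℝ → ℝ),
    (∀ i, IsDDF (Fi i)) → IsDDF G →
    ∀ x : ℝ, τ (fun y => ⨆ i, Fi i y) G x = ⨆ i, τ (Fi i) G x

/-- Condition (W): for all `F, G ∈ Δ⁺`, `x > 0` and real `α, β`,
`F x > α` and `G x > β` imply `τ F G x > max (α + β - 1) 0`. -/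
def CondW (τ : (ℝ → ℝ) → (ℝ → ℝ) → (ℝ → ℝ)) : Prop :=
  ∀ F G, IsDDF F → IsDDF G → ∀ x : ℝ, 0 < x → ∀ α β : ℝ,
    α < F x → β < G x → max (α + β - 1) 0 < τ F G x

/-- Convergence of a sequence in the strong topology of the PM space:
for every `t > 0`, eventually `F_{p_n p}(t) > 1 - t`. -/
def SConvSeq {L : Type*} (ρ : L → L → ℝ → ℝ) (pn : ℕ → L) (p : L) : Prop :=
  ∀ t : ℝ, 0 < t → ∃ n₀ : ℕ, ∀ n ≥ n₀, 1 - t < ρ (pn n) p t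

/-- Cauchy sequence in a PM space. -/
def SCauchySeq {L : Type*} (ρ : L → L → ℝ → ℝ) (pn : ℕ → L) : Prop :=
  ∀ t : ℝ, 0 < t → ∃ n₀ : ℕ, ∀ m ≥ n₀, ∀ n ≥ n₀, 1 - t < ρ (pn m) (pn n) t

/-- Completeness of a PM space: every Cauchy sequence converges in the strong topology. -/
def SComplete {L : Type*} (ρ : L → L → ℝ → ℝ) : Prop :=
  ∀ pn : ℕ → L, SCauchySeq ρ pn → ∃ p : L, SConvSeq ρ pn p

/-- The closure of a set in the strong topology of a PM space (the strong topology is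
metrizable, so the closure coincides with the sequential closure). -/
def SClosure {L : Type*} (ρ : L → L → ℝ → ℝ) (A : Set L) : Set L :=
  {q | ∃ pn : ℕ → L, (∀ n, pn n ∈ A) ∧ SConvSeq ρ pn q}

/-- A set closed in the strong topology of a PM space. -/
def SClosed {L : Type*} (ρ : L → L → ℝ → ℝ) (A : Set L) : Prop :=
  SClosure ρ A ⊆ A

/-- The probabilistic distance from a point to a set: `F_{pB}(x) = sup {F_{pq}(x) : q ∈ B}`. -/
noncomputable def probDistToSet {L : Type*} (ρ : L → L → ℝ → ℝ) (p : L) (B : Set L)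
    (x : ℝ) : ℝ :=
  sSup ((fun q => ρ p q x) '' B)

/-- `Γ*_{AB}(x) = inf {F_{pB}(x) : p ∈ A}`. -/
noncomputable def gammaStar {L : Type*} (ρ : L → L → ℝ → ℝ) (A B : Set L) (x : ℝ) : ℝ :=
  sInf ((fun p => probDistToSet ρ p B x) '' A)

/-- `F*_{AB}`, the left-continuous regularization of `Γ*_{AB}`:
`F*_{AB}(x) = sup_{x' < x} Γ*_{AB}(x')`. -/
noncomputable def fStar {L : Type*} (ρ : L → L → ℝ → ℝ) (A B : Set L) (x : ℝ) : ℝ :=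
  sSup (gammaStar ρ A B '' Set.Iio x)

/-- The probabilistic Pompeiu-Hausdorff distance:
`H(A,B)(x) = F_{AB}(x) = min (F*_{AB}(x)) (F*_{BA}(x))`. -/
noncomputable def probHaus {L : Type*} (ρ : L → L → ℝ → ℝ) (A B : Set L) (x : ℝ) : ℝ :=
  min (fStar ρ A B x) (fStar ρ B A x)

/-- Convergence of a sequence of sets with respect to the probabilistic
Pompeiu-Hausdorff metric `H`. -/
def HConv {L : Type*} (ρ : L → L → ℝ → ℝ) (An : ℕ → Set L) (A : Set L) : Prop :=
  ∀ t : ℝ, 0 < t → ∃ n₀ : ℕ, ∀ n ≥ n₀, 1 - t < probHaus ρ (An n) A t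

/-- Cauchy sequence of sets with respect to the probabilistic Pompeiu-Hausdorff metric `H`. -/
def HCauchy {L : Type*} (ρ : L → L → ℝ → ℝ) (An : ℕ → Set L) : Prop :=
  ∀ t : ℝ, 0 < t → ∃ n₀ : ℕ, ∀ m ≥ n₀, ∀ n ≥ n₀, 1 - t < probHaus ρ (An m) (An n) t

/-- A subset `A` of a PM space is compact in the strong topology (which is metrizable,
so compactness coincides with sequential compactness): every sequence in `A` has a
subsequence converging strongly to a point of `A`. -/
def SCompact {L : Type*} (ρ : L → L → ℝ → ℝ) (A : Set L) : Prop :=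
  ∀ pn : ℕ → L, (∀ n, pn n ∈ A) →
    ∃ q ∈ A, ∃ φ : ℕ → ℕ, StrictMono φ ∧ SConvSeq ρ (fun k => pn (φ k)) q

/-- `D⁺`: distance distribution functions with `lim_{x → ∞} F x = 1`. -/
def IsDDFD (F : ℝ → ℝ) : Prop :=
  IsDDF F ∧ Filter.Tendsto F Filter.atTop (nhds 1)

/-- A Šerstnev random normed space `(L, ν, τ)`. -/
structure IsRNSpace {L : Type*} [AddCommGroup L] [Module ℝ L]
    (ν : L → ℝ → ℝ) (τ : (ℝ → ℝ) → (ℝ → ℝ) → (ℝ → ℝ)) : Prop where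
  triangleFn : IsTriangleFn τ
  maps_D : ∀ F G, IsDDFD F → IsDDFD G → IsDDFD (τ F G)
  nu_mem : ∀ p : L, IsDDFD (ν p)
  nu_eq_iff : ∀ p : L, ν p = eps0 ↔ p = 0
  nu_smul : ∀ a : ℝ, a ≠ 0 → ∀ p : L, ∀ x : ℝ, 0 ≤ x → ν (a • p) x = ν p (x / |a|)
  nu_add : ∀ p q : L, τ (ν p) (ν q) ≤ ν (p + q)

/-- The inequality `τ(F,G)(x) ≥ sup_{t ∈ [0,1]} min (F (t x)) (G ((1-t) x))`
for all `x ≥ 0` and `F, G ∈ D⁺`. -/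
def SerstnevIneq (τ : (ℝ → ℝ) → (ℝ → ℝ) → (ℝ → ℝ)) : Prop :=
  ∀ F G, IsDDFD F → IsDDFD G → ∀ x : ℝ, 0 ≤ x →
    sSup ((fun t => min (F (t * x)) (G ((1 - t) * x))) '' Set.Icc (0:ℝ) 1) ≤ τ F G x

open Set Filter Metric TopologicalSpace Topology

theorem IsDDF.nonneg {F : ℝ → ℝ} (hF : IsDDF F) (x : ℝ) : 0 ≤ F x := by
  rcases le_or_gt x 0 with hx | hx
  · exact (hF.2.2.2 x hx).ge
  · exact (hF.2.2.2 0 le_rfl).ge.trans (hF.1 hx.le)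

theorem SerstnevIneq.min_le {τ : (ℝ → ℝ) → (ℝ → ℝ) → (ℝ → ℝ)} (hser : SerstnevIneq τ)
    {F G : ℝ → ℝ} (hF : IsDDFD F) (hG : IsDDFD G) {x t : ℝ} (hx : 0 ≤ x) (ht : t ∈ Icc (0 : ℝ) 1) :
    min (F (t * x)) (G ((1 - t) * x)) ≤ τ F G x := by
  have hbdd : BddAbove ((fun s => min (F (s * x)) (G ((1 - s) * x))) '' Icc (0 : ℝ) 1) :=
    ⟨1, by rintro _ ⟨s, -, rfl⟩; exact (min_le_left _ _).trans (hF.1.2.2.1 _)⟩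
  exact (le_csSup hbdd ⟨t, ht, rfl⟩).trans (hser F G hF hG x hx)

/-- A probabilistic metric space under the triangle function
`τ_M(F, G)(x) = sup_{s + t = x} min (F s) (G t)`. -/
structure IsMinMengerSpace {L : Type*} (ρ : L → L → ℝ → ℝ) : Prop where
  isDDF : ∀ p q, IsDDF (ρ p q)
  self_eq : ∀ p, ρ p p = eps0
  eq_of_eq_eps0 : ∀ p q, ρ p q = eps0 → p = q
  symm : ∀ p q, ρ p q = ρ q p
  min_le : ∀ p q r {x y : ℝ}, 0 ≤ x → 0 ≤ y → min (ρ p q x) (ρ q r y) ≤ ρ p r (x + y)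

namespace IsRNSpace

variable {L : Type*} [AddCommGroup L] [Module ℝ L] {ν : L → ℝ → ℝ}
  {τ : (ℝ → ℝ) → (ℝ → ℝ) → (ℝ → ℝ)}

theorem nu_neg (hRN : IsRNSpace ν τ) (u : L) : ν (-u) = ν u := funext fun x => by
  rcases le_or_gt x 0 with hx | hx
  · rw [(hRN.nu_mem _).1.2.2.2 x hx, (hRN.nu_mem u).1.2.2.2 x hx]
  · simpa using hRN.nu_smul (-1) (by norm_num) u x hx.le

theorem nu_smul_mul (hRN : IsRNSpace ν τ) {a : ℝ} (ha : 0 < a) (u : L) {x : ℝ} (hx : 0 ≤ x) :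
    ν (a • u) (a * x) = ν u x := by
  rw [hRN.nu_smul a ha.ne' u _ (by positivity), abs_of_pos ha, mul_div_cancel_left₀ x ha.ne']

theorem min_le_nu_add (hRN : IsRNSpace ν τ) (hser : SerstnevIneq τ) (u v : L) {x y : ℝ}
    (hx : 0 ≤ x) (hy : 0 ≤ y) : min (ν u x) (ν v y) ≤ ν (u + v) (x + y) := by
  rcases (add_nonneg hx hy).eq_or_lt with hxy | hxy
  · calc min (ν u x) (ν v y) ≤ ν u x := min_le_left _ _
      _ = 0 := (hRN.nu_mem u).1.2.2.2 x (by linarith)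
      _ ≤ ν (u + v) (x + y) := (hRN.nu_mem _).1.nonneg _
  have hθ : x / (x + y) ∈ Icc (0 : ℝ) 1 :=
    ⟨div_nonneg hx hxy.le, div_le_one_of_le₀ (by linarith) hxy.le⟩
  have hθx : x / (x + y) * (x + y) = x := div_mul_cancel₀ x hxy.ne'
  have hθy : (1 - x / (x + y)) * (x + y) = y := by rw [sub_mul, hθx]; ring
  calc min (ν u x) (ν v y)
      = min (ν u (x / (x + y) * (x + y))) (ν v ((1 - x / (x + y)) * (x + y))) := by
        rw [hθx, hθy]
    _ ≤ τ (ν u) (ν v) (x + y) := hser.min_le (hRN.nu_mem u) (hRN.nu_mem v) hxy.le hθ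
    _ ≤ ν (u + v) (x + y) := hRN.nu_add u v _

theorem min_le_nu_smul_add_smul (hRN : IsRNSpace ν τ) (hser : SerstnevIneq τ) (u v : L)
    {a b x : ℝ} (ha : 0 ≤ a) (hb : 0 ≤ b) (hab : a + b = 1) (hx : 0 ≤ x) :
    min (ν u x) (ν v x) ≤ ν (a • u + b • v) x := by
  rcases ha.eq_or_lt with rfl | ha
  · obtain rfl : b = 1 := by linarith
    simp
  rcases hb.eq_or_lt with rfl | hb
  · obtain rfl : a = 1 := by linarith
    simp
  calc min (ν u x) (ν v x) = min (ν (a • u) (a * x)) (ν (b • v) (b * x)) := by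
        rw [hRN.nu_smul_mul ha u hx, hRN.nu_smul_mul hb v hx]
    _ ≤ ν (a • u + b • v) (a * x + b * x) :=
        hRN.min_le_nu_add hser _ _ (by positivity) (by positivity)
    _ = ν (a • u + b • v) x := by rw [← add_mul, hab, one_mul]

theorem isMinMengerSpace (hRN : IsRNSpace ν τ) (hser : SerstnevIneq τ) :
    IsMinMengerSpace fun p q : L => ν (p - q) where
  isDDF p q := (hRN.nu_mem _).1
  self_eq p := by simpa using (hRN.nu_eq_iff 0).2 rfl
  eq_of_eq_eps0 p q h := sub_eq_zero.1 ((hRN.nu_eq_iff _).1 h)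
  symm p q := by rw [← neg_sub, hRN.nu_neg]
  min_le p q r x y hx hy := by simpa using hRN.min_le_nu_add hser (p - q) (q - r) hx hy

end IsRNSpace

/-- For `F = F_{pq}`, the infimal radius `t` with `q ∈ U_t(p)`. -/
noncomputable def levyRadius (F : ℝ → ℝ) : ℝ :=
  sInf {t : ℝ | 0 < t ∧ 1 - t < F t}

theorem levyRadius_nonneg (F : ℝ → ℝ) : 0 ≤ levyRadius F :=
  Real.sInf_nonneg fun _ ht => ht.1.le

theorem levyRadius_le {F : ℝ → ℝ} {t : ℝ} (ht : 0 < t) (h : 1 - t < F t) : levyRadius F ≤ t :=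
  csInf_le ⟨0, fun _ hs => hs.1.le⟩ ⟨ht, h⟩

theorem IsDDF.sub_lt_of_levyRadius_lt {F : ℝ → ℝ} (hF : IsDDF F) {t : ℝ} (h : levyRadius F < t) :
    1 - t < F t := by
  have hne : {t : ℝ | 0 < t ∧ 1 - t < F t}.Nonempty :=
    ⟨2, two_pos, by linarith [hF.nonneg 2]⟩
  obtain ⟨s, ⟨-, hs⟩, hst⟩ := exists_lt_of_csInf_lt hne h
  linarith [hF.1 hst.le]

theorem levyRadius_eps0 : levyRadius eps0 = 0 :=
  le_antisymm (le_of_forall_gt_imp_ge_of_dense fun t ht =>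
    levyRadius_le ht (by simp [eps0, not_le.2 ht, ht])) (levyRadius_nonneg _)

theorem IsDDF.eq_eps0_of_levyRadius_eq_zero {F : ℝ → ℝ} (hF : IsDDF F) (h : levyRadius F = 0) :
    F = eps0 := by
  funext x
  rcases le_or_gt x 0 with hx | hx
  · simp [eps0, hx, hF.2.2.2 x hx]
  · refine (le_antisymm (hF.2.2.1 x) (le_of_forall_sub_le fun ε hε => ?_)).trans
      (if_neg (not_le.2 hx)).symm
    have hs : 1 - min ε x < F (min ε x) := hF.sub_lt_of_levyRadius_lt (h ▸ lt_min hε hx)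
    linarith [hF.1 (min_le_right ε x), min_le_left ε x]

theorem levyRadius_le_add {F G H : ℝ → ℝ} (hF : IsDDF F) (hG : IsDDF G)
    (hFGH : ∀ {x y : ℝ}, 0 ≤ x → 0 ≤ y → min (F x) (G y) ≤ H (x + y)) :
    levyRadius H ≤ levyRadius F + levyRadius G := by
  refine le_of_forall_pos_le_add fun ε hε => ?_
  have hs := hF.sub_lt_of_levyRadius_lt (lt_add_of_pos_right (levyRadius F) (half_pos hε))
  have ht := hG.sub_lt_of_levyRadius_lt (lt_add_of_pos_right (levyRadius G) (half_pos hε))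
  have hpos := add_pos_of_nonneg_of_pos (levyRadius_nonneg F) (half_pos hε)
  have hpos' := add_pos_of_nonneg_of_pos (levyRadius_nonneg G) (half_pos hε)
  calc levyRadius H ≤ (levyRadius F + ε / 2) + (levyRadius G + ε / 2) :=
        levyRadius_le (by positivity)
          ((lt_min (by linarith) (by linarith)).trans_le (hFGH hpos.le hpos'.le))
    _ = levyRadius F + levyRadius G + ε := by ring

namespace IsMinMengerSpace

variable {L : Type*} {ρ : L → L → ℝ → ℝ}

noncomputable abbrev toMetricSpace (h : IsMinMengerSpace ρ) : MetricSpace L where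
  dist p q := levyRadius (ρ p q)
  dist_self p := by simp only [h.self_eq, levyRadius_eps0]
  dist_comm p q := congrArg levyRadius (h.symm p q)
  dist_triangle p q r := levyRadius_le_add (h.isDDF p q) (h.isDDF q r) (h.min_le p q r)
  eq_of_dist_eq_zero hpq := h.eq_of_eq_eps0 _ _ ((h.isDDF _ _).eq_eps0_of_levyRadius_eq_zero hpq)

end IsMinMengerSpace

section ProbHaus

variable {L : Type*} {ρ : L → L → ℝ → ℝ}

theorem probDistToSet_nonneg (hρ : ∀ p q, IsDDF (ρ p q)) (p : L) (B : Set L) (x : ℝ) :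
    0 ≤ probDistToSet ρ p B x :=
  Real.sSup_nonneg (by rintro _ ⟨q, -, rfl⟩; exact (hρ p q).nonneg x)

theorem gammaStar_le_probDistToSet (hρ : ∀ p q, IsDDF (ρ p q)) {A : Set L} (B : Set L) {p : L}
    (hp : p ∈ A) (x : ℝ) : gammaStar ρ A B x ≤ probDistToSet ρ p B x :=
  csInf_le ⟨0, by rintro _ ⟨r, -, rfl⟩; exact probDistToSet_nonneg hρ r B x⟩ ⟨p, hp, rfl⟩

theorem exists_sub_lt_of_sub_lt_fStar (hρ : ∀ p q, IsDDF (ρ p q)) {A B : Set L}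
    (hB : B.Nonempty) {t : ℝ} (h : 1 - t < fStar ρ A B t) :
    ∀ p ∈ A, ∃ q ∈ B, 1 - t < ρ p q t := by
  obtain ⟨_, ⟨x, hx, rfl⟩, hγ⟩ := exists_lt_of_lt_csSup ((nonempty_Iio (a := t)).image _) h
  intro p hp
  obtain ⟨_, ⟨q, hq, rfl⟩, hpq⟩ :=
    exists_lt_of_lt_csSup (hB.image _) (hγ.trans_le (gammaStar_le_probDistToSet hρ B hp x))
  exact ⟨q, hq, hpq.trans_le ((hρ p q).1 hx.le)⟩

theorem le_fStar_of_forall_exists (hρ : ∀ p q, IsDDF (ρ p q)) {A B : Set L} (hA : A.Nonempty)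
    {c x t : ℝ} (hx : x < t) (h : ∀ p ∈ A, ∃ q ∈ B, c ≤ ρ p q x) : c ≤ fStar ρ A B t := by
  have hγ : c ≤ gammaStar ρ A B x := by
    refine le_csInf (hA.image _) ?_
    rintro _ ⟨p, hp, rfl⟩
    obtain ⟨q, hq, hpq⟩ := h p hp
    exact hpq.trans
      (le_csSup ⟨1, by rintro _ ⟨r, -, rfl⟩; exact (hρ p r).2.2.1 x⟩ ⟨q, hq, rfl⟩)
  obtain ⟨p, hp⟩ := hA
  have hbdd : BddAbove (gammaStar ρ A B '' Iio t) := by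
    refine ⟨1, ?_⟩
    rintro _ ⟨y, -, rfl⟩
    exact (gammaStar_le_probDistToSet hρ B hp y).trans
      (Real.sSup_le (by rintro _ ⟨q, -, rfl⟩; exact (hρ p q).2.2.1 y) zero_le_one)
  exact hγ.trans (le_csSup hbdd ⟨x, hx, rfl⟩)

end ProbHaus

section StrongMetric

variable {L : Type*} [MetricSpace L] {ρ : L → L → ℝ → ℝ}

theorem sub_lt_of_dist_lt (hρ : ∀ p q, IsDDF (ρ p q))
    (hd : ∀ p q, dist p q = levyRadius (ρ p q)) {p q : L} {t : ℝ} (h : dist p q < t) :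
    1 - t < ρ p q t :=
  (hρ p q).sub_lt_of_levyRadius_lt (hd p q ▸ h)

theorem dist_le_of_sub_lt (hd : ∀ p q, dist p q = levyRadius (ρ p q)) {p q : L} {t : ℝ}
    (ht : 0 < t) (h : 1 - t < ρ p q t) : dist p q ≤ t :=
  hd p q ▸ levyRadius_le ht h

theorem sConvSeq_iff_tendsto (hρ : ∀ p q, IsDDF (ρ p q))
    (hd : ∀ p q, dist p q = levyRadius (ρ p q)) {u : ℕ → L} {p : L} :
    SConvSeq ρ u p ↔ Tendsto u atTop (𝓝 p) := by
  rw [Metric.tendsto_atTop]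
  refine ⟨fun h ε hε => ?_, fun h t ht => ?_⟩
  · obtain ⟨N, hN⟩ := h (ε / 2) (half_pos hε)
    exact ⟨N, fun n hn => (dist_le_of_sub_lt hd (half_pos hε) (hN n hn)).trans_lt
      (half_lt_self hε)⟩
  · obtain ⟨N, hN⟩ := h t ht
    exact ⟨N, fun n hn => sub_lt_of_dist_lt hρ hd (hN n hn)⟩

theorem completeSpace_of_sComplete (hρ : ∀ p q, IsDDF (ρ p q))
    (hd : ∀ p q, dist p q = levyRadius (ρ p q)) (hc : SComplete ρ) : CompleteSpace L := by
  refine Metric.complete_of_cauchySeq_tendsto fun u hu => ?_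
  obtain ⟨p, hp⟩ := hc u fun t ht => by
    obtain ⟨N, hN⟩ := Metric.cauchySeq_iff.1 hu t ht
    exact ⟨N, fun m hm n hn => sub_lt_of_dist_lt hρ hd (hN m hm n hn)⟩
  exact ⟨p, (sConvSeq_iff_tendsto hρ hd).1 hp⟩

theorem sClosed_iff_isClosed (hρ : ∀ p q, IsDDF (ρ p q))
    (hd : ∀ p q, dist p q = levyRadius (ρ p q)) {A : Set L} : SClosed ρ A ↔ IsClosed A := by
  rw [← isSeqClosed_iff_isClosed]
  exact ⟨fun h u p hu hp => h ⟨u, hu, (sConvSeq_iff_tendsto hρ hd).2 hp⟩,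
    fun h _ ⟨u, hu, hp⟩ => h hu ((sConvSeq_iff_tendsto hρ hd).1 hp)⟩

theorem sCompact_iff_isCompact (hρ : ∀ p q, IsDDF (ρ p q))
    (hd : ∀ p q, dist p q = levyRadius (ρ p q)) {A : Set L} : SCompact ρ A ↔ IsCompact A := by
  rw [isCompact_iff_isSeqCompact]
  simp only [SCompact, IsSeqCompact, sConvSeq_iff_tendsto hρ hd, Function.comp_def]

theorem hausdorffEDist_le_of_sub_lt_probHaus (hρ : ∀ p q, IsDDF (ρ p q))
    (hd : ∀ p q, dist p q = levyRadius (ρ p q)) {A B : Set L} (hA : A.Nonempty)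
    (hB : B.Nonempty) {t : ℝ} (ht : 0 < t) (h : 1 - t < probHaus ρ A B t) :
    hausdorffEDist A B ≤ ENNReal.ofReal t := by
  have hclose : ∀ {C D : Set L}, D.Nonempty → 1 - t < fStar ρ C D t →
      ∀ p ∈ C, ∃ q ∈ D, edist p q ≤ ENNReal.ofReal t := fun hD hCD p hp => by
    obtain ⟨q, hq, hpq⟩ := exists_sub_lt_of_sub_lt_fStar hρ hD hCD p hp
    exact ⟨q, hq, (edist_le_ofReal ht.le).2 (dist_le_of_sub_lt hd ht hpq)⟩
  rw [probHaus, lt_min_iff] at h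
  exact hausdorffEDist_le_of_mem_edist (hclose hB h.1) (hclose hA h.2)

theorem sub_lt_probHaus_of_hausdorffEDist_lt (hρ : ∀ p q, IsDDF (ρ p q))
    (hd : ∀ p q, dist p q = levyRadius (ρ p q)) {A B : Set L} (hA : A.Nonempty)
    (hB : B.Nonempty) {t : ℝ} (ht : 0 < t) (h : hausdorffEDist A B < ENNReal.ofReal (t / 2)) :
    1 - t < probHaus ρ A B t := by
  have hclose : ∀ {C D : Set L}, C.Nonempty → hausdorffEDist C D < ENNReal.ofReal (t / 2) →
      1 - t < fStar ρ C D t := fun hC hCD => by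
    refine lt_of_lt_of_le (by linarith) (le_fStar_of_forall_exists hρ hC (half_lt_self ht)
      (c := 1 - t / 2) fun p hp => ?_)
    obtain ⟨q, hq, hpq⟩ := exists_edist_lt_of_hausdorffEDist_lt hp hCD
    exact ⟨q, hq, (sub_lt_of_dist_lt hρ hd (edist_lt_ofReal.1 hpq)).le⟩
  exact lt_min (hclose hA h) (hclose hB (hausdorffEDist_comm.trans_lt h))

theorem exists_hConv_of_hCauchy (hρ : ∀ p q, IsDDF (ρ p q))
    (hd : ∀ p q, dist p q = levyRadius (ρ p q)) {X : Type*} [PseudoEMetricSpace X]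
    [CompleteSpace X] (c : X → Set L) (hc : ∀ C D, edist C D = hausdorffEDist (c C) (c D))
    (Cn : ℕ → X) (hne : ∀ n, (c (Cn n)).Nonempty) (h : HCauchy ρ fun n => c (Cn n)) :
    ∃ C, (c C).Nonempty ∧ HConv ρ (fun n => c (Cn n)) (c C) := by
  have hcauchy : CauchySeq Cn := EMetric.cauchySeq_iff.2 fun ε hε => by
    obtain ⟨t, -, ht, htε⟩ := ENNReal.lt_iff_exists_real_btwn.1 hε
    have ht : 0 < t := ENNReal.ofReal_pos.1 ht
    obtain ⟨N, hN⟩ := h t ht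
    exact ⟨N, fun m hm n hn => (hc _ _).trans_lt <|
      (hausdorffEDist_le_of_sub_lt_probHaus hρ hd (hne m) (hne n) ht (hN m hm n hn)).trans_lt htε⟩
  obtain ⟨C, hC⟩ := cauchySeq_tendsto_of_complete hcauchy
  have hlim : ∀ δ > 0, ∀ᶠ n in atTop,
      hausdorffEDist (c (Cn n)) (c C) < ENNReal.ofReal δ := fun δ hδ => by
    simpa only [hc] using EMetric.tendsto_nhds.1 hC _ (ENNReal.ofReal_pos.2 hδ)
  have hCne : (c C).Nonempty := by
    obtain ⟨n, hn⟩ := (hlim 1 one_pos).exists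
    exact nonempty_of_hausdorffEDist_ne_top (hne n) hn.ne_top
  refine ⟨C, hCne, fun t ht => ?_⟩
  obtain ⟨N, hN⟩ := eventually_atTop.1 (hlim (t / 2) (half_pos ht))
  exact ⟨N, fun n hn => sub_lt_probHaus_of_hausdorffEDist_lt hρ hd (hne n) hCne ht (hN n hn)⟩

end StrongMetric

theorem IsRNSpace.convex_of_hConv {L : Type*} [AddCommGroup L] [Module ℝ L] [MetricSpace L]
    {ν : L → ℝ → ℝ} {τ : (ℝ → ℝ) → (ℝ → ℝ) → (ℝ → ℝ)} (hRN : IsRNSpace ν τ)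
    (hser : SerstnevIneq τ) (hd : ∀ p q : L, dist p q = levyRadius (ν (p - q)))
    {An : ℕ → Set L} {A : Set L} (hAne : ∀ n, (An n).Nonempty) (hAn : ∀ n, Convex ℝ (An n))
    (hA : IsClosed A) (h : HConv (fun p q => ν (p - q)) An A) : Convex ℝ A := by
  have hρ : ∀ p q : L, IsDDF (ν (p - q)) := fun _ _ => (hRN.nu_mem _).1
  intro p hp q hq a b ha hb hab
  rw [← hA.closure_eq, Metric.mem_closure_iff]
  intro ε hε
  obtain ⟨n, hn⟩ := h (ε / 3) (by positivity)
  have hH := hn n le_rfl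
  rw [probHaus, lt_min_iff] at hH
  obtain ⟨p', hp', hpp'⟩ := exists_sub_lt_of_sub_lt_fStar hρ (hAne n) hH.2 p hp
  obtain ⟨q', hq', hqq'⟩ := exists_sub_lt_of_sub_lt_fStar hρ (hAne n) hH.2 q hq
  obtain ⟨s, hs, hs'⟩ :=
    exists_sub_lt_of_sub_lt_fStar hρ ⟨p, hp⟩ hH.1 _ (hAn n hp' hq' ha hb hab)
  have hcomb : 1 - ε / 3 < ν ((a • p + b • q) - (a • p' + b • q')) (ε / 3) := by
    have hsub : (a • p + b • q) - (a • p' + b • q') = a • (p - p') + b • (q - q') := by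
      simp only [smul_sub]; abel
    rw [hsub]
    exact (lt_min hpp' hqq').trans_le
      (hRN.min_le_nu_smul_add_smul hser _ _ ha hb hab (by positivity))
  refine ⟨s, hs, ?_⟩
  calc dist (a • p + b • q) s ≤ dist (a • p + b • q) (a • p' + b • q') + dist (a • p' + b • q') s :=
        dist_triangle _ _ _
    _ ≤ ε / 3 + ε / 3 :=
        add_le_add (dist_le_of_sub_lt hd (by positivity) hcomb)
          (dist_le_of_sub_lt hd (by positivity) hs')
    _ < ε := by linarith

theorem Pfc_closed_and_complete_general {L : Type*} [AddCommGroup L] [Module ℝ L]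
    (ν : L → ℝ → ℝ) (τ : (ℝ → ℝ) → (ℝ → ℝ) → (ℝ → ℝ)) (hRN : IsRNSpace ν τ)
    (hser : SerstnevIneq τ) :
    (∀ (An : ℕ → Set L) (A : Set L),
      (∀ n, (An n).Nonempty ∧ SClosed (fun p q => ν (p - q)) (An n) ∧ Convex ℝ (An n)) →
      A.Nonempty → SClosed (fun p q => ν (p - q)) A →
      HConv (fun p q => ν (p - q)) An A → Convex ℝ A) ∧
    (SComplete (fun p q : L => ν (p - q)) →
      (∀ An : ℕ → Set L,
        (∀ n, (An n).Nonempty ∧ SClosed (fun p q => ν (p - q)) (An n) ∧ Convex ℝ (An n)) →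
        HCauchy (fun p q => ν (p - q)) An →
        ∃ A : Set L, A.Nonempty ∧ SClosed (fun p q => ν (p - q)) A ∧ Convex ℝ A ∧
          HConv (fun p q => ν (p - q)) An A) ∧
      (∀ An : ℕ → Set L,
        (∀ n, (An n).Nonempty ∧ SCompact (fun p q => ν (p - q)) (An n) ∧ Convex ℝ (An n)) →
        HCauchy (fun p q => ν (p - q)) An →
        ∃ A : Set L, A.Nonempty ∧ SCompact (fun p q => ν (p - q)) A ∧ Convex ℝ A ∧
          HConv (fun p q => ν (p - q)) An A)) := by
  let : MetricSpace L := (hRN.isMinMengerSpace hser).toMetricSpace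
  have hρ := (hRN.isMinMengerSpace hser).isDDF
  have hd : ∀ p q : L, dist p q = levyRadius (ν (p - q)) := fun _ _ => rfl
  refine ⟨fun An A hAn _ hA h => hRN.convex_of_hConv hser hd (fun n => (hAn n).1)
    (fun n => (hAn n).2.2) ((sClosed_iff_isClosed hρ hd).1 hA) h, fun hc => ?_⟩
  have := completeSpace_of_sComplete hρ hd hc
  refine ⟨fun An hAn h => ?_, fun An hAn h => ?_⟩
  · obtain ⟨C, hCne, hC⟩ := exists_hConv_of_hCauchy hρ hd (X := Closeds L) (↑)
      (fun _ _ => Closeds.edist_eq) (fun n => ⟨An n, (sClosed_iff_isClosed hρ hd).1 (hAn n).2.1⟩)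
      (fun n => (hAn n).1) h
    exact ⟨C, hCne, (sClosed_iff_isClosed hρ hd).2 C.isClosed,
      hRN.convex_of_hConv hser hd (fun n => (hAn n).1) (fun n => (hAn n).2.2) C.isClosed hC, hC⟩
  · obtain ⟨C, hCne, hC⟩ := exists_hConv_of_hCauchy hρ hd (X := NonemptyCompacts L) (↑)
      (fun _ _ => rfl)
      (fun n => ⟨⟨An n, (sCompact_iff_isCompact hρ hd).1 (hAn n).2.1⟩, (hAn n).1⟩)
      (fun n => (hAn n).1) h
    exact ⟨C, hCne, (sCompact_iff_isCompact hρ hd).2 C.isCompact,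
      hRN.convex_of_hConv hser hd (fun n => (hAn n).1) (fun n => (hAn n).2.2)
        C.isCompact.isClosed hC, hC⟩

/-- In a Šerstnev random normed space with sup-continuous triangle function satisfying
`τ(F,G)(x) ≥ sup_{t ∈ [0,1]} min (F (t x)) (G ((1-t) x))`: the family `P_{fc}(L)` of
nonempty closed convex sets is closed in `P_f(L)` with respect to the probabilistic
Pompeiu-Hausdorff metric `H`; consequently, if `L` is complete, `P_{fc}(L)` and the
family `P_{kc}(L)` of nonempty compact convex sets are complete with respect to `H`. -/
theorem Pfc_closed_and_complete {L : Type*} [AddCommGroup L] [Module ℝ L]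
    (ν : L → ℝ → ℝ) (τ : (ℝ → ℝ) → (ℝ → ℝ) → (ℝ → ℝ)) (hRN : IsRNSpace ν τ)
    (hsup : SupContinuous τ) (hser : SerstnevIneq τ) :
    (∀ (An : ℕ → Set L) (A : Set L),
      (∀ n, (An n).Nonempty ∧ SClosed (fun p q => ν (p - q)) (An n) ∧ Convex ℝ (An n)) →
      A.Nonempty → SClosed (fun p q => ν (p - q)) A →
      HConv (fun p q => ν (p - q)) An A → Convex ℝ A) ∧
    (SComplete (fun p q : L => ν (p - q)) →
      (∀ An : ℕ → Set L,
        (∀ n, (An n).Nonempty ∧ SClosed (fun p q => ν (p - q)) (An n) ∧ Convex ℝ (An n)) →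
        HCauchy (fun p q => ν (p - q)) An →
        ∃ A : Set L, A.Nonempty ∧ SClosed (fun p q => ν (p - q)) A ∧ Convex ℝ A ∧
          HConv (fun p q => ν (p - q)) An A) ∧
      (∀ An : ℕ → Set L,
        (∀ n, (An n).Nonempty ∧ SCompact (fun p q => ν (p - q)) (An n) ∧ Convex ℝ (An n)) →
        HCauchy (fun p q => ν (p - q)) An →
        ∃ A : Set L, A.Nonempty ∧ SCompact (fun p q => ν (p - q)) A ∧ Convex ℝ A ∧
          HConv (fun p q => ν (p - q)) An A)) :=
  Pfc_closed_and_complete_general ν τ hRN hser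
end
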